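/- arXiv:1005.1304 — 2 statements merged into one kernel-verified Lean document; each statement's English description precedes it below -/
import Mathlib

section
/- Let R → T ← S be surjective ring homomorphisms of commutative rings, and let P = R ×_T S = {(x,y) ∈ R × S : ε_R(x) = ε_S(y)} be the fiber product. If R ←α_R− A −α_S→ S are surjective ring homomorphisms, T = R ⊗_A S with ε_R(r) = r⊗1 and ε_S(s) = 1⊗s, then the map a ↦ (α_R(a), α_S(a)) induces a ring isomorphism A/(Ker(α_R) ∩ Ker(α_S)) ≅ R ×_T S. -/
open RingTheory.Sequence Function

noncomputable section

/-- The fiber product `R ×_T S` as a subring of `R × S`. -/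
def fiberProd {R S T : Type*} [CommRing R] [CommRing S] [CommRing T]
    (f : R →+* T) (g : S →+* T) : Subring (R × S) :=
  RingHom.eqLocus (f.comp (RingHom.fst R S)) (g.comp (RingHom.snd R S))

/-- Length of a module: the Krull dimension of its lattice of submodules. -/
noncomputable def lenE (R M : Type*) [CommRing R] [AddCommGroup M] [Module R M] : ℕ∞ :=
  WithBot.unbotD 0 (Order.krullDim (Submodule R M))

/-- Depth of a local ring: supremum of lengths of regular sequences of nonunits. -/
noncomputable def rdepth (Q : Type*) [CommRing Q] : ℕ∞ :=
  sSup {n : ℕ∞ | ∃ rs : List Q, (∀ x ∈ rs, x ∈ nonunits Q) ∧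
    RingTheory.Sequence.IsRegular Q rs ∧ (rs.length : ℕ∞) = n}

/-- A local ring is Cohen-Macaulay if its depth equals its Krull dimension. -/
def IsCMRing (Q : Type*) [CommRing Q] : Prop :=
  (rdepth Q : WithBot ℕ∞) = ringKrullDim Q

/-- Cohen-Macaulay local ring of dimension `d`. -/
def IsCMOfDim (Q : Type*) [CommRing Q] (d : ℕ) : Prop :=
  ringKrullDim Q = ((d : ℕ∞) : WithBot ℕ∞) ∧ rdepth Q = d

/-- The socle of a module over a local ring: largest submodule killed by the maximal ideal
(= set of nonunits). -/
noncomputable def socle (Q M : Type*) [CommRing Q] [AddCommGroup M] [Module Q M] :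
    Submodule Q M :=
  sSup {N : Submodule Q M | ∀ r ∈ nonunits Q, ∀ x ∈ N, r • x = 0}

/-- A local ring is Gorenstein if it is Cohen-Macaulay (there is a maximal regular
sequence of length its Krull dimension) and of type one, i.e. the socle of the artinian
reduction is a simple module. -/
def IsGorensteinRing (Q : Type*) [CommRing Q] : Prop :=
  ∃ rs : List Q, (∀ x ∈ rs, x ∈ nonunits Q) ∧ RingTheory.Sequence.IsRegular Q rs ∧
    ((rs.length : ℕ∞) : WithBot ℕ∞) = ringKrullDim Q ∧
    IsSimpleModule Q (socle Q (Q ⧸ (Ideal.ofList rs)))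

/-- Gorenstein local ring of dimension `d`. -/
def IsGorensteinOfDim (Q : Type*) [CommRing Q] (d : ℕ) : Prop :=
  ringKrullDim Q = ((d : ℕ∞) : WithBot ℕ∞) ∧ ∃ rs : List Q, (∀ x ∈ rs, x ∈ nonunits Q) ∧
    RingTheory.Sequence.IsRegular Q rs ∧ rs.length = d ∧
    IsSimpleModule Q (socle Q (Q ⧸ (Ideal.ofList rs)))

/-- The embedding dimension: minimal number of generators of the maximal ideal
(the ideal of nonunits). -/
noncomputable def edim (Q : Type*) [CommRing Q] : ℕ :=
  sInf {n : ℕ | ∃ s : Finset Q, s.card = n ∧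
    ((Ideal.span (s : Set Q) : Ideal Q) : Set Q) = nonunits Q}

/-!
The map `a ↦ (α_R a, α_S a)` lands in `R ×_T S` and its kernel is `Ker α_R ∩ Ker α_S`, so the
point is surjectivity. As `R` and `S` are quotients of `A`, both map compatibly onto
`A ⧸ (Ker α_R + Ker α_S)`, and `r ⊗ s ↦ r s` then defines a map out of `T`. Hence
`α_R a ⊗ 1 = 1 ⊗ α_S b` forces `a - b = i + j` with `i ∈ Ker α_R`, `j ∈ Ker α_S`, and
`a - i = b + j` is a common preimage.
-/

namespace fiberProd

variable {A R S T : Type*} [CommRing A] [CommRing R] [CommRing S] [CommRing T]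
  {εR : R →+* T} {εS : S →+* T}

def lift (f : A →+* R) (g : A →+* S) (h : εR.comp f = εS.comp g) : A →+* fiberProd εR εS :=
  ((f.prod g).codRestrict (fiberProd εR εS)) fun a => RingHom.congr_fun h a

variable (f : A →+* R) (g : A →+* S) (h : εR.comp f = εS.comp g)

@[simp]
theorem coe_lift (a : A) : (lift f g h a : R × S) = (f a, g a) := rfl

theorem ker_lift : RingHom.ker (lift f g h) = RingHom.ker f ⊓ RingHom.ker g := by
  ext a
  simp [RingHom.mem_ker, ← Subtype.coe_inj, Prod.ext_iff]

theorem lift_surjective (hfg : ∀ x y, εR x = εS y → ∃ a, f a = x ∧ g a = y) :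
    Surjective (lift f g h) := by
  rintro ⟨⟨x, y⟩, hxy⟩
  obtain ⟨a, hax, hay⟩ := hfg x y hxy
  exact ⟨a, Subtype.ext (Prod.ext hax hay)⟩

def quotientInfEquiv (hfg : Surjective (lift f g h)) :
    A ⧸ (RingHom.ker f ⊓ RingHom.ker g) ≃+* fiberProd εR εS :=
  (Ideal.quotEquivOfEq (ker_lift f g h).symm).trans (RingHom.quotientKerEquivOfSurjective hfg)

@[simp]
theorem coe_quotientInfEquiv_mk (hfg : Surjective (lift f g h)) (a : A) :
    (quotientInfEquiv f g h hfg (Ideal.Quotient.mk _ a) : R × S) = (f a, g a) := rfl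

end fiberProd

section TensorProduct

open Algebra.TensorProduct

variable {A R S : Type*} [CommRing A] [CommRing R] [CommRing S] [Algebra A R] [Algebra A S]

def algHomQuotientOfSurjective (hR : Surjective (algebraMap A R)) {K : Ideal A}
    (hK : RingHom.ker (algebraMap A R) ≤ K) : R →ₐ[A] A ⧸ K :=
  (Ideal.Quotient.factorₐ A hK).comp
    (Ideal.quotientKerAlgEquivOfSurjective (f := Algebra.ofId A R) hR).symm.toAlgHom

theorem exists_algebraMap_eq_of_tmul_one_eq_one_tmul (hR : Surjective (algebraMap A R))
    (hS : Surjective (algebraMap A S)) {x : R} {y : S} (h : x ⊗ₜ[A] (1 : S) = (1 : R) ⊗ₜ y) :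
    ∃ a : A, algebraMap A R a = x ∧ algebraMap A S a = y := by
  obtain ⟨a, rfl⟩ := hR x
  obtain ⟨b, rfl⟩ := hS y
  have hab : Ideal.Quotient.mk (RingHom.ker (algebraMap A R) ⊔ RingHom.ker (algebraMap A S)) a =
      Ideal.Quotient.mk _ b := by
    simpa using congrArg (productMap (algHomQuotientOfSurjective hR le_sup_left)
      (algHomQuotientOfSurjective hS le_sup_right)) h
  obtain ⟨i, hi, j, hj, hij⟩ := Submodule.mem_sup.1 (Ideal.Quotient.eq.1 hab)
  refine ⟨a - i, by simp [RingHom.mem_ker.1 hi], ?_⟩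
  rw [show a - i = b + j by linear_combination -hij]
  simp [RingHom.mem_ker.1 hj]

end TensorProduct

/-- `A/(Ker α_R ∩ Ker α_S) ≅ R ×_T S` for `T = R ⊗_A S`, induced by
`a ↦ (α_R a, α_S a)`. -/
theorem stmt0 (A R S : Type) [CommRing A] [CommRing R] [CommRing S]
    [Algebra A R] [Algebra A S]
    (hR : Function.Surjective (algebraMap A R))
    (hS : Function.Surjective (algebraMap A S)) :
    ∃ e : (A ⧸ (RingHom.ker (algebraMap A R) ⊓ RingHom.ker (algebraMap A S))) ≃+*
        (fiberProd ((Algebra.TensorProduct.includeLeft :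
              R →ₐ[A] TensorProduct A R S) : R →+* TensorProduct A R S)
          ((Algebra.TensorProduct.includeRight :
              S →ₐ[A] TensorProduct A R S) : S →+* TensorProduct A R S)),
      ∀ a : A, ((e (Ideal.Quotient.mk _ a) : R × S)) = (algebraMap A R a, algebraMap A S a) := by
  have h : ((Algebra.TensorProduct.includeLeft : R →ₐ[A] TensorProduct A R S) :
      R →+* TensorProduct A R S).comp (algebraMap A R) =
      ((Algebra.TensorProduct.includeRight : S →ₐ[A] TensorProduct A R S) :
        S →+* TensorProduct A R S).comp (algebraMap A S) :=
    RingHom.ext fun a => by simp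
  have hsurj := fiberProd.lift_surjective _ _ h fun _ _ hxy =>
    exists_algebraMap_eq_of_tmul_one_eq_one_tmul hR hS hxy
  exact ⟨fiberProd.quotientInfEquiv _ _ h hsurj, fiberProd.coe_quotientInfEquiv_mk _ _ h hsurj⟩
end
end

section
/- With surjective local homomorphisms ε_R : R → T and ε_S : S → T of artinian local rings, the lengths satisfy length(R ×_T S) + length(T) = length(R) + length(S). -/
open RingTheory.Sequence Function

noncomputable section

/-! The fiber product `P = R ×_T S` is the kernel of the surjection of `P`-modules
`R × S → T`, `(r, s) ↦ ε_R r - ε_S s`, so additivity of length gives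
`length_P P + length_P T = length_P R + length_P S`. Since `P` surjects onto `R`, `S` and `T`,
each of these lengths over `P` is the length over the ring itself. -/

lemma lenE_eq_length (A M : Type*) [CommRing A] [AddCommGroup M] [Module A M] :
    lenE A M = Module.length A M := by
  rw [lenE, ← Module.coe_length, WithBot.unbotD_coe]

theorem Module.length_eqLocus_add_length {A M N Q : Type*} [Ring A] [AddCommGroup M]
    [AddCommGroup N] [AddCommGroup Q] [Module A M] [Module A N] [Module A Q]
    (f : M →ₗ[A] Q) (g : N →ₗ[A] Q) (hf : Surjective f) :
    length A (LinearMap.eqLocus (f ∘ₗ LinearMap.fst A M N) (g ∘ₗ LinearMap.snd A M N)) +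
      length A Q = length A M + length A N := by
  set d := f ∘ₗ LinearMap.fst A M N - g ∘ₗ LinearMap.snd A M N
  have hd : Surjective d := fun q => by
    obtain ⟨m, rfl⟩ := hf q
    exact ⟨(m, 0), by simp [d]⟩
  rw [← length_prod A M N, LinearMap.eqLocus_eq_ker_sub]
  exact (length_eq_add_of_exact _ d (Submodule.subtype_injective _) hd
    (LinearMap.exact_subtype_ker_map d)).symm

namespace fiberProd

variable {R S T : Type*} [CommRing R] [CommRing S] [CommRing T] {eR : R →+* T} {eS : S →+* T}

def fst : fiberProd eR eS →+* R := (RingHom.fst R S).comp (fiberProd eR eS).subtype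

def snd : fiberProd eR eS →+* S := (RingHom.snd R S).comp (fiberProd eR eS).subtype

lemma map_fst_eq_map_snd (p : fiberProd eR eS) : eR (fst p) = eS (snd p) := p.2

lemma fst_surjective (hS : Surjective eS) : Surjective (fst : fiberProd eR eS →+* R) := by
  intro r
  obtain ⟨s, hs⟩ := hS (eR r)
  exact ⟨⟨(r, s), hs.symm⟩, rfl⟩

lemma snd_surjective (hR : Surjective eR) : Surjective (snd : fiberProd eR eS →+* S) := by
  intro s
  obtain ⟨r, hr⟩ := hR (eS s)
  exact ⟨⟨(r, s), hr⟩, rfl⟩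

theorem length_add_length (hR : Surjective eR) (hS : Surjective eS) :
    Module.length (fiberProd eR eS) (fiberProd eR eS) + Module.length T T =
      Module.length R R + Module.length S S := by
  let : Algebra (fiberProd eR eS) R := fst.toAlgebra
  let : Algebra (fiberProd eR eS) S := snd.toAlgebra
  let : Algebra (fiberProd eR eS) T := (eR.comp fst).toAlgebra
  let fR : R →ₗ[fiberProd eR eS] T := { eR with map_smul' := fun p r => map_mul eR _ _ }
  let fS : S →ₗ[fiberProd eR eS] T :=
    { eS with
      map_smul' := fun p s => by
        show eS (snd p * s) = eR (fst p) * eS s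
        rw [map_mul, map_fst_eq_map_snd] }
  let e : fiberProd eR eS ≃ₗ[fiberProd eR eS]
      LinearMap.eqLocus (fR ∘ₗ LinearMap.fst _ R S) (fS ∘ₗ LinearMap.snd _ R S) :=
    { toFun := fun p => ⟨p.1, p.2⟩
      invFun := fun x => ⟨x.1, x.2⟩
      map_add' := fun _ _ => rfl
      map_smul' := fun _ _ => rfl
      left_inv := fun _ => rfl
      right_inv := fun _ => rfl }
  rw [e.length_eq,
    ← Module.length_eq_of_surjective (M := T) (S := fiberProd eR eS)
      (hR.comp (fst_surjective hS)),
    ← Module.length_eq_of_surjective (M := R) (S := fiberProd eR eS) (fst_surjective hS),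
    ← Module.length_eq_of_surjective (M := S) (S := fiberProd eR eS) (snd_surjective hR)]
  exact Module.length_eqLocus_add_length fR fS hR

end fiberProd

theorem stmt2_general (R S T : Type) [CommRing R] [CommRing S] [CommRing T]
    (eR : R →+* T) (eS : S →+* T)
    (hR : Function.Surjective eR) (hS : Function.Surjective eS) :
    lenE (fiberProd eR eS) (fiberProd eR eS) + lenE T T = lenE R R + lenE S S := by
  simp only [lenE_eq_length]
  exact fiberProd.length_add_length hR hS

/-- for artinian local rings,
`length(R ×_T S) + length T = length R + length S`. -/
theorem stmt2 (R S T : Type) [CommRing R] [CommRing S] [CommRing T]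
    [IsLocalRing R] [IsLocalRing S] [IsLocalRing T]
    [IsArtinianRing R] [IsArtinianRing S] [IsArtinianRing T]
    (eR : R →+* T) (eS : S →+* T)
    (hR : Function.Surjective eR) (hS : Function.Surjective eS) :
    lenE (fiberProd eR eS) (fiberProd eR eS) + lenE T T = lenE R R + lenE S S :=
  stmt2_general R S T eR eS hR hS
end
end
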